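/- The M-elimination transformation for a positive heuristic atom ({M}, a) ∈ C⁺ replaces it in C⁺ by ({M, T}, a) and adds ({T}, a) to C⁻. The original heuristic condition is satisfied w.r.t. A if and only if the resulting condition is satisfied w.r.t. A. -/
import Mathlib


inductive TV | T | M | F | U
deriving DecidableEq

/-- A heuristic atom: a sign set together with an atom. -/
abbrev HAtom (α : Type) := Finset TV × α

/-- A heuristic atom is satisfied w.r.t. the truth function `tv` of an assignment. -/
def satHA {α : Type} (tv : α → TV) (h : HAtom α) : Prop := tv h.2 ∈ h.1

/-- A heuristic condition `(Cp, Cn)` is satisfied iff every member of `Cp` is satisfied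
and no member of `Cn` is satisfied. -/
def SatCond {α : Type} (tv : α → TV) (Cp Cn : Finset (HAtom α)) : Prop :=
  (∀ h ∈ Cp, satHA tv h) ∧ (∀ h ∈ Cn, ¬ satHA tv h)

/-- Positive M-elimination: replacing the positive atom `({M}, a)` by `({M, T}, a)` and
adding `({T}, a)` to the negative condition preserves satisfaction. -/
theorem stmt9 {α : Type} [DecidableEq α] (tv : α → TV)
    (Cp Cn : Finset (HAtom α)) (a : α)
    (hmem : (({TV.M} : Finset TV), a) ∈ Cp) :
    SatCond tv Cp Cn ↔
      SatCond tv
        (insert (({TV.M, TV.T} : Finset TV), a) (Cp.erase ({TV.M}, a)))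
        (insert (({TV.T} : Finset TV), a) Cn) := by
  constructor
  · rintro ⟨hp, hn⟩
    have hM : tv a = TV.M := by
      have := hp _ hmem
      simpa [satHA] using this
    refine ⟨?_, ?_⟩
    · intro h hh
      rcases Finset.mem_insert.mp hh with rfl | hh
      · simp [satHA, hM]
      · exact hp _ (Finset.mem_of_mem_erase hh)
    · intro h hh
      rcases Finset.mem_insert.mp hh with rfl | hh
      · simp [satHA, hM]
      · exact hn _ hh
  · rintro ⟨hp, hn⟩
    have hMT : tv a = TV.M ∨ tv a = TV.T := by
      have := hp _ (Finset.mem_insert_self _ _)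
      simpa [satHA] using this
    have hnT : tv a ≠ TV.T := by
      have := hn _ (Finset.mem_insert_self _ _)
      simpa [satHA] using this
    have hM : tv a = TV.M := hMT.resolve_right hnT
    refine ⟨?_, ?_⟩
    · intro h hh
      by_cases he : h = (({TV.M} : Finset TV), a)
      · subst he; simp [satHA, hM]
      · exact hp _ (Finset.mem_insert_of_mem (Finset.mem_erase.mpr ⟨he, hh⟩))
    · intro h hh
      exact hn _ (Finset.mem_insert_of_mem hh)
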